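/- arXiv:1009.1052 — 2 statements merged into one kernel-verified Lean document; each statement's English description precedes it below -/
import Mathlib

section
/- Let f be differentiable on an open interval (a,b) with |f'(t)| ≤ F_1 for all t and f' Lipschitz with constant F_2. Fix c ∈ (a,b) and define φ(t) = t^{-1}[f(c+t) - f(c) - f'(c)t] for t ≠ 0 in (a-c, b-c), and φ(0) = 0. Then φ is continuous, |φ(t)| ≤ min(2F_1, F_2|t|/2) for all t, and φ is Lipschitz with constant F_2/2. -/
open Set

/-- m = 1 case: φ(t) = t⁻¹[f(c+t) - f(c) - f'(c)t] (φ(0)=0) is continuous,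
bounded by min(2F₁, F₂|t|/2) and Lipschitz with constant F₂/2. -/
theorem remainder_m_one (a b c : ℝ) (hc : c ∈ Ioo a b) (f f' : ℝ → ℝ) (F₁ F₂ : ℝ)
    (hderiv : ∀ t ∈ Ioo a b, HasDerivAt f (f' t) t)
    (hbdd : ∀ t ∈ Ioo a b, |f' t| ≤ F₁)
    (hlip : ∀ t ∈ Ioo a b, ∀ t' ∈ Ioo a b, |f' t - f' t'| ≤ F₂ * |t - t'|)
    (φ : ℝ → ℝ)
    (hφ : ∀ t, φ t = if t = 0 then 0 else t⁻¹ * (f (c + t) - f c - f' c * t)) :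
    ContinuousOn φ (Ioo (a - c) (b - c)) ∧
    (∀ t ∈ Ioo (a - c) (b - c), |φ t| ≤ min (2 * F₁) (F₂ * |t| / 2)) ∧
    (∀ t ∈ Ioo (a - c) (b - c), ∀ t' ∈ Ioo (a - c) (b - c),
      |φ t - φ t'| ≤ (F₂ / 2) * |t - t'|) := by
  obtain ⟨hac, hcb⟩ := hc
  -- F₂ ≥ 0
  have hF₂0 : 0 ≤ F₂ := by
    have h1 : c ∈ Ioo a b := ⟨hac, hcb⟩
    have h2 : (c + b) / 2 ∈ Ioo a b := by constructor <;> linarith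
    have := hlip c h1 ((c + b) / 2) h2
    have habs : 0 ≤ |f' c - f' ((c + b) / 2)| := abs_nonneg _
    have hpos : 0 < |c - (c + b) / 2| := by
      rw [abs_pos]; intro h; linarith [sub_eq_zero.mp h]
    nlinarith
  -- membership of the segment
  have hmem : ∀ t ∈ Ioo (a - c) (b - c), ∀ u ∈ Icc (0:ℝ) 1, c + u * t ∈ Ioo a b := by
    intro t ht u hu
    obtain ⟨ht1, ht2⟩ := ht
    obtain ⟨hu1, hu2⟩ := hu
    rcases le_or_gt 0 t with h | h
    · constructor
      · nlinarith [mul_nonneg hu1 h]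
      · nlinarith [mul_le_of_le_one_left h hu2]
    · constructor
      · nlinarith [mul_le_mul_of_nonpos_right hu2 h.le]
      · nlinarith [mul_nonpos_of_nonneg_of_nonpos hu1 h.le]
  -- continuity of f'
  have hf'lip : LipschitzOnWith (Real.toNNReal F₂) f' (Ioo a b) := by
    rw [lipschitzOnWith_iff_dist_le_mul]
    intro x hx y hy
    rw [Real.dist_eq, Real.dist_eq, Real.coe_toNNReal _ hF₂0]
    exact hlip x hx y hy
  have hf'cont : ContinuousOn f' (Ioo a b) := hf'lip.continuousOn
  -- continuity of the integrand
  have hcont : ∀ t ∈ Ioo (a - c) (b - c),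
      ContinuousOn (fun u => f' (c + u * t)) (Icc (0:ℝ) 1) := by
    intro t ht
    apply hf'cont.comp
    · exact (continuous_const.add (continuous_id.mul continuous_const)).continuousOn
    · intro u hu; exact hmem t ht u hu
  -- integral representation
  have hrep : ∀ t ∈ Ioo (a - c) (b - c),
      φ t = ∫ u in (0:ℝ)..1, (f' (c + u * t) - f' c) := by
    intro t ht
    rcases eq_or_ne t 0 with rfl | htne
    · simp [hφ]
    · rw [hφ, if_neg htne]
      have hg : ∀ u ∈ uIcc (0:ℝ) 1, HasDerivAt (fun u => f (c + u * t)) (f' (c + u * t) * t) u := by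
        intro u hu
        rw [uIcc_of_le zero_le_one] at hu
        have h1 : HasDerivAt (fun u : ℝ => c + u * t) t u := by
          simpa using ((hasDerivAt_id u).mul_const t).const_add c
        exact (hderiv _ (hmem t ht u hu)).comp u h1
      have hcont' : ContinuousOn (fun u => f' (c + u * t) * t) (uIcc (0:ℝ) 1) := by
        rw [uIcc_of_le zero_le_one]
        exact (hcont t ht).mul continuousOn_const
      have hint := intervalIntegral.integral_eq_sub_of_hasDerivAt hg
        (hcont'.intervalIntegrable)
      simp only [one_mul, zero_mul, add_zero] at hint
      have hint1 : IntervalIntegrable (fun u => f' (c + u * t)) MeasureTheory.volume 0 1 := by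
        apply ContinuousOn.intervalIntegrable
        rw [uIcc_of_le zero_le_one]; exact hcont t ht
      rw [intervalIntegral.integral_sub hint1 intervalIntegrable_const,
        intervalIntegral.integral_const]
      have hmul : (∫ u in (0:ℝ)..1, f' (c + u * t)) * t = f (c + t) - f c := by
        rw [← intervalIntegral.integral_mul_const]; exact hint
      have : (∫ u in (0:ℝ)..1, f' (c + u * t)) = (f (c + t) - f c) * t⁻¹ := by
        rw [← hmul, mul_assoc, mul_inv_cancel₀ htne, mul_one]
      rw [this]
      field_simp
      ring
  -- Lipschitz claim
  have hlipφ : ∀ t ∈ Ioo (a - c) (b - c), ∀ t' ∈ Ioo (a - c) (b - c),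
      |φ t - φ t'| ≤ (F₂ / 2) * |t - t'| := by
    intro t ht t' ht'
    rw [hrep t ht, hrep t' ht']
    have hint1 : IntervalIntegrable (fun u => f' (c + u * t) - f' c)
        MeasureTheory.volume 0 1 := by
      apply ContinuousOn.intervalIntegrable
      rw [uIcc_of_le zero_le_one]; exact (hcont t ht).sub continuousOn_const
    have hint2 : IntervalIntegrable (fun u => f' (c + u * t') - f' c)
        MeasureTheory.volume 0 1 := by
      apply ContinuousOn.intervalIntegrable
      rw [uIcc_of_le zero_le_one]; exact (hcont t' ht').sub continuousOn_const
    rw [← intervalIntegral.integral_sub hint1 hint2]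
    have heq : ∀ u : ℝ, (f' (c + u * t) - f' c) - (f' (c + u * t') - f' c) =
        f' (c + u * t) - f' (c + u * t') := by intro u; ring
    simp only [heq]
    have h1 : ‖∫ u in (0:ℝ)..1, (f' (c + u * t) - f' (c + u * t'))‖ ≤
        ∫ u in (0:ℝ)..1, ‖f' (c + u * t) - f' (c + u * t')‖ :=
      intervalIntegral.norm_integral_le_integral_norm zero_le_one
    have hintn : IntervalIntegrable (fun u => ‖f' (c + u * t) - f' (c + u * t')‖)
        MeasureTheory.volume 0 1 := by
      apply ContinuousOn.intervalIntegrable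
      rw [uIcc_of_le zero_le_one]
      exact ((hcont t ht).sub (hcont t' ht')).norm
    have hintb : IntervalIntegrable (fun u => F₂ * |t - t'| * u) MeasureTheory.volume 0 1 :=
      (continuous_const.mul continuous_id).intervalIntegrable 0 1
    have h2 : (∫ u in (0:ℝ)..1, ‖f' (c + u * t) - f' (c + u * t')‖) ≤
        ∫ u in (0:ℝ)..1, F₂ * |t - t'| * u := by
      apply intervalIntegral.integral_mono_on zero_le_one hintn hintb
      intro u hu
      have h3 := hlip _ (hmem t ht u hu) _ (hmem t' ht' u hu)
      have heq2 : |c + u * t - (c + u * t')| = u * |t - t'| := by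
        rw [show c + u * t - (c + u * t') = u * (t - t') by ring, abs_mul,
          abs_of_nonneg hu.1]
      rw [heq2] at h3
      simpa [mul_assoc, mul_comm |t - t'| u] using h3
    have h4 : (∫ u in (0:ℝ)..1, F₂ * |t - t'| * u) = F₂ / 2 * |t - t'| := by
      rw [intervalIntegral.integral_const_mul, integral_id]
      ring
    calc |∫ u in (0:ℝ)..1, (f' (c + u * t) - f' (c + u * t'))| ≤ _ := h1
      _ ≤ _ := h2
      _ = F₂ / 2 * |t - t'| := h4
  refine ⟨?_, ?_, hlipφ⟩
  · -- continuity from Lipschitz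
    have : LipschitzOnWith (Real.toNNReal (F₂ / 2)) φ (Ioo (a - c) (b - c)) := by
      rw [lipschitzOnWith_iff_dist_le_mul]
      intro x hx y hy
      rw [Real.dist_eq, Real.dist_eq, Real.coe_toNNReal _ (by linarith : (0:ℝ) ≤ F₂ / 2)]
      exact hlipφ x hx y hy
    exact this.continuousOn
  · -- bounds
    intro t ht
    rw [hrep t ht]
    refine le_min ?_ ?_
    · have := intervalIntegral.norm_integral_le_of_norm_le_const (C := 2 * F₁)
        (f := fun u => f' (c + u * t)  - f' c) (a := 0) (b := 1) ?_
      · simpa using this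
      · intro u hu
        rw [uIoc_of_le zero_le_one] at hu
        have hu' : u ∈ Icc (0:ℝ) 1 := ⟨le_of_lt hu.1, hu.2⟩
        have h1 := hbdd _ (hmem t ht u hu')
        have h2 := hbdd c ⟨hac, hcb⟩
        calc ‖f' (c + u * t) - f' c‖ ≤ |f' (c + u * t)| + |f' c| := abs_sub _ _
          _ ≤ 2 * F₁ := by linarith
    · have h1 : ‖∫ u in (0:ℝ)..1, (f' (c + u * t) - f' c)‖ ≤
          ∫ u in (0:ℝ)..1, ‖f' (c + u * t) - f' c‖ :=
        intervalIntegral.norm_integral_le_integral_norm zero_le_one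
      have hint1 : IntervalIntegrable (fun u => ‖f' (c + u * t) - f' c‖)
          MeasureTheory.volume 0 1 := by
        apply ContinuousOn.intervalIntegrable
        rw [uIcc_of_le zero_le_one]
        exact ((hcont t ht).sub continuousOn_const).norm
      have hint2 : IntervalIntegrable (fun u => F₂ * |t| * u) MeasureTheory.volume 0 1 :=
        (continuous_const.mul continuous_id).intervalIntegrable 0 1
      have h2 : (∫ u in (0:ℝ)..1, ‖f' (c + u * t) - f' c‖) ≤
          ∫ u in (0:ℝ)..1, F₂ * |t| * u := by
        apply intervalIntegral.integral_mono_on zero_le_one hint1 hint2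
        intro u hu
        have h3 := hlip _ (hmem t ht u hu) c ⟨hac, hcb⟩
        have : |c + u * t - c| = u * |t| := by
          rw [add_sub_cancel_left, abs_mul, abs_of_nonneg hu.1]
        rw [this] at h3
        simpa [mul_assoc, mul_comm |t| u] using h3
      have h4 : (∫ u in (0:ℝ)..1, F₂ * |t| * u) = F₂ * |t| / 2 := by
        rw [intervalIntegral.integral_const_mul, integral_id]
        ring
      calc |∫ u in (0:ℝ)..1, (f' (c + u * t) - f' c)| ≤ _ := h1
        _ ≤ _ := h2
        _ = F₂ * |t| / 2 := h4
end

section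
/- Let m ≥ 2 and let f be m times differentiable on an open interval (a,b), with f^{(m)} Lipschitz with constant F_{m+1}. Fix c ∈ (a,b) and define φ(t) = t^{-m}[f(c+t) - Σ_{k=0}^{m} f^{(k)}(c) t^k / k!] for t ≠ 0, φ(0) = 0, on the interval (a-c, b-c). Then for every t ≠ 0 in (a-c, b-c), |φ'(t)| ≤ F_{m+1}/m!; consequently φ is Lipschitz with constant F_{m+1}/m!. -/
open Set

lemma abs_le_of_deriv_le_aux {f f' B B' : ℝ → ℝ} {t : ℝ}
    (hf : ∀ u ∈ Icc (0:ℝ) t, HasDerivAt f (f' u) u)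
    (h0 : |f 0| ≤ B 0)
    (hB : ∀ u, HasDerivAt B (B' u) u)
    (hb : ∀ u ∈ Icc (0:ℝ) t, |f' u| ≤ B' u) :
    ∀ u ∈ Icc (0:ℝ) t, |f u| ≤ B u := by
  intro u hu
  have h := image_norm_le_of_norm_deriv_right_le_deriv_boundary
    (f := f) (f' := f') (a := 0) (b := t)
    (fun x hx => (hf x hx).continuousAt.continuousWithinAt)
    (fun x hx => (hf x (Ico_subset_Icc_self hx)).hasDerivWithinAt)
    (by simpa [Real.norm_eq_abs] using h0) hB
    (fun x hx => by simpa [Real.norm_eq_abs] using hb x (Ico_subset_Icc_self hx))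
  simpa [Real.norm_eq_abs] using h hu

lemma step_bound {f f' : ℝ → ℝ} {F t : ℝ} (p : ℕ)
    (hf : ∀ u ∈ Icc (0:ℝ) t, HasDerivAt f (f' u) u) (h0 : f 0 = 0)
    (hb : ∀ u ∈ Icc (0:ℝ) t, |f' u| ≤ F * u ^ p / (Nat.factorial p)) :
    ∀ u ∈ Icc (0:ℝ) t, |f u| ≤ F * u ^ (p + 1) / (Nat.factorial (p + 1)) := by
  have hB : ∀ u : ℝ, HasDerivAt (fun u : ℝ => F * u ^ (p+1) / (Nat.factorial (p+1)))
      (F * u ^ p / (Nat.factorial p)) u := by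
    intro u
    have h := ((hasDerivAt_pow (p+1) u).const_mul F).div_const ((Nat.factorial (p+1) : ℝ))
    refine h.congr_deriv ?_
    have hfac : ((Nat.factorial (p+1) : ℝ)) = (p+1) * (Nat.factorial p) := by
      push_cast [Nat.factorial_succ]; ring
    rw [hfac, Nat.add_sub_cancel]
    push_cast
    field_simp
  intro u hu
  have := abs_le_of_deriv_le_aux hf (by simp [h0]) hB hb u hu
  simpa using this

noncomputable def Dfun (m : ℕ) (c : ℝ) (fd : ℕ → ℝ → ℝ) (k : ℕ) (s : ℝ) : ℝ :=
  fd k (c + s) - ∑ j ∈ Finset.range (m + 1 - k), fd (k + j) c * s ^ j / (Nat.factorial j)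

noncomputable def Psif (m : ℕ) (c : ℝ) (fd : ℕ → ℝ → ℝ) (k : ℕ) (s : ℝ) : ℝ :=
  s * Dfun m c fd (k+1) s - ((m:ℝ) - k) * Dfun m c fd k s

lemma D_zero {m : ℕ} {c : ℝ} {fd : ℕ → ℝ → ℝ} {k : ℕ} (hk : k ≤ m) :
    Dfun m c fd k 0 = 0 := by
  obtain ⟨n, hn⟩ : ∃ n, m + 1 - k = n + 1 := ⟨m - k, by omega⟩
  simp [Dfun, hn, Finset.sum_range_succ']

lemma Psi_zero {m : ℕ} {c : ℝ} {fd : ℕ → ℝ → ℝ} {k : ℕ} (hk : k < m) :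
    Psif m c fd k 0 = 0 := by
  simp [Psif, D_zero (le_of_lt hk), D_zero (Nat.succ_le_of_lt hk)]

lemma D_deriv {m : ℕ} {a b c : ℝ} {fd : ℕ → ℝ → ℝ}
    (hderiv : ∀ k < m, ∀ t ∈ Ioo a b, HasDerivAt (fd k) (fd (k + 1) t) t)
    {k : ℕ} (hk : k < m) {s : ℝ} (hs : c + s ∈ Ioo a b) :
    HasDerivAt (Dfun m c fd k) (Dfun m c fd (k+1) s) s := by
  have h1 : HasDerivAt (fun u => fd k (c + u)) (fd (k+1) (c+s)) s := by
    have := (hderiv k hk (c+s) hs).comp s ((hasDerivAt_id s).const_add c)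
    simpa [Function.comp_def] using this
  have h3 : HasDerivAt
      (fun u => ∑ j ∈ Finset.range (m + 1 - k), fd (k + j) c * u ^ j / (Nat.factorial j))
      (∑ j ∈ Finset.range (m + 1 - k), fd (k + j) c * ((j:ℝ) * s ^ (j-1)) / (Nat.factorial j)) s := by
    apply HasDerivAt.fun_sum
    intro j hj
    exact ((hasDerivAt_pow j s).const_mul (fd (k+j) c)).div_const _
  have h4 : (∑ j ∈ Finset.range (m + 1 - k), fd (k + j) c * ((j:ℝ) * s ^ (j-1)) / (Nat.factorial j))
      = ∑ j ∈ Finset.range (m + 1 - (k+1)), fd ((k+1) + j) c * s ^ j / (Nat.factorial j) := by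
    obtain ⟨n, hn⟩ : ∃ n, m + 1 - k = n + 1 := ⟨m - k, by omega⟩
    have hn2 : m + 1 - (k + 1) = n := by omega
    rw [hn, hn2, Finset.sum_range_succ']
    simp only [Nat.cast_zero, zero_mul, mul_zero, zero_div, add_zero, Nat.add_sub_cancel]
    apply Finset.sum_congr rfl
    intro j _
    have hkj : k + (j + 1) = k + 1 + j := by omega
    rw [hkj, Nat.factorial_succ]
    push_cast
    have : ((j:ℝ) + 1) ≠ 0 := by positivity
    field_simp
  have := h1.sub (h4 ▸ h3)
  exact this

lemma Psi_deriv {m : ℕ} {a b c : ℝ} {fd : ℕ → ℝ → ℝ}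
    (hderiv : ∀ k < m, ∀ t ∈ Ioo a b, HasDerivAt (fd k) (fd (k + 1) t) t)
    {k : ℕ} (hk : k + 1 < m) {s : ℝ} (hs : c + s ∈ Ioo a b) :
    HasDerivAt (Psif m c fd k) (Psif m c fd (k+1) s) s := by
  have h1 := (hasDerivAt_id s).mul (D_deriv hderiv hk hs)
  have h2 := (D_deriv hderiv (by omega : k < m) hs).const_mul ((m:ℝ) - k)
  have h3 := h1.sub h2
  refine h3.congr_deriv ?_
  simp only [Psif, id_eq, one_mul]
  push_cast
  ring

lemma Psi_base {m : ℕ} {a b c : ℝ} {fd : ℕ → ℝ → ℝ} {Fm1 : ℝ} (hm : 2 ≤ m)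
    (hderiv : ∀ k < m, ∀ t ∈ Ioo a b, HasDerivAt (fd k) (fd (k + 1) t) t)
    (hlip : ∀ t ∈ Ioo a b, ∀ t' ∈ Ioo a b, |fd m t - fd m t'| ≤ Fm1 * |t - t'|)
    {t : ℝ} (hmem : ∀ u ∈ Icc (0:ℝ) t, c + u ∈ Ioo a b) :
    ∀ s ∈ Icc (0:ℝ) t, |Psif m c fd (m-1) s| ≤ Fm1 * s^2 / 2 := by
  intro s hs
  have hmem' : ∀ u ∈ Icc (0:ℝ) s, c + u ∈ Ioo a b := fun u hu =>
    hmem u ⟨hu.1, le_trans hu.2 hs.2⟩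
  set w : ℝ → ℝ := fun u => u * fd m (c + s) - fd (m-1) (c+u) + fd (m-1) c with hwdef
  have hw : ∀ u ∈ Icc (0:ℝ) s, HasDerivAt w (fd m (c+s) - fd m (c+u)) u := by
    intro u hu
    have hfd : HasDerivAt (fun v => fd (m-1) (c+v)) (fd m (c+u)) u := by
      have := (hderiv (m-1) (by omega) (c+u) (hmem' u hu)).comp u
        ((hasDerivAt_id u).const_add c)
      have hm1 : m - 1 + 1 = m := by omega
      simpa [Function.comp_def, hm1] using this
    have := (((hasDerivAt_id u).mul_const (fd m (c+s))).sub hfd).add_const (fd (m-1) c)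
    simpa [hwdef] using this
  have hB : ∀ u : ℝ, HasDerivAt (fun u : ℝ => Fm1 * (s*u - u^2/2)) (Fm1 * (s - u)) u := by
    intro u
    have h1 : HasDerivAt (fun u : ℝ => s*u - u^2/2) (s - u) u := by
      have := (((hasDerivAt_id u).const_mul s).sub (((hasDerivAt_pow 2 u)).div_const 2))
      exact this.congr_deriv (by norm_num)
    simpa using h1.const_mul Fm1
  have hb : ∀ u ∈ Icc (0:ℝ) s, |fd m (c+s) - fd m (c+u)| ≤ Fm1 * (s - u) := by
    intro u hu
    have h := hlip (c+s) (hmem' s (right_mem_Icc.2 hs.1)) (c+u) (hmem' u hu)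
    have he : c + s - (c + u) = s - u := by ring
    rw [he, abs_of_nonneg (by linarith [hu.2] : (0:ℝ) ≤ s - u)] at h
    exact h
  have hws := abs_le_of_deriv_le_aux hw (by simp [hwdef]) hB hb s
    (right_mem_Icc.2 hs.1)
  have hid : Psif m c fd (m-1) s = w s := by
    have h1 : m - 1 + 1 = m := by omega
    have h2 : m + 1 - (m-1) = 2 := by omega
    have h3 : ((m:ℝ) - ((m-1:ℕ):ℝ)) = 1 := by
      rw [Nat.cast_sub (by omega : 1 ≤ m)]; ring
    have h4 : m + 1 - m = 1 := by omega
    simp only [Psif, h1, Dfun, h2, h3, h4, hwdef]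
    simp [Finset.sum_range_succ, Finset.sum_range_one, h1, Nat.factorial]
    ring
  rw [hid]
  calc |w s| ≤ Fm1 * (s*s - s^2/2) := hws
    _ = Fm1 * s^2/2 := by ring

lemma remainder_pos_case (m : ℕ) (hm : 2 ≤ m) (a b c : ℝ) (hc : c ∈ Ioo a b)
    (fd : ℕ → ℝ → ℝ) (Fm1 : ℝ)
    (hderiv : ∀ k < m, ∀ t ∈ Ioo a b, HasDerivAt (fd k) (fd (k + 1) t) t)
    (hlip : ∀ t ∈ Ioo a b, ∀ t' ∈ Ioo a b, |fd m t - fd m t'| ≤ Fm1 * |t - t'|)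
    (φ : ℝ → ℝ)
    (hφ : ∀ t, φ t = if t = 0 then 0
      else (t ^ m)⁻¹ * (fd 0 (c + t) - ∑ k ∈ Finset.range (m + 1),
        fd k c * t ^ k / (Nat.factorial k))) :
    ∀ t ∈ Ioo (0:ℝ) (b - c),
      |φ t| ≤ Fm1 / (Nat.factorial m) * t ∧ DifferentiableAt ℝ φ t ∧
      |deriv φ t| ≤ Fm1 / (Nat.factorial m) := by
  intro t ht
  have ht0 : (0:ℝ) < t := ht.1
  have hmem : ∀ u ∈ Icc (0:ℝ) t, c + u ∈ Ioo a b := by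
    intro u hu
    exact ⟨by linarith [hc.1, hu.1], by linarith [hu.2, ht.2]⟩
  -- ψ bounds by downward induction
  have hind : ∀ i, i ≤ m - 1 → ∀ s ∈ Icc (0:ℝ) t,
      |Psif m c fd (m-1-i) s| ≤ Fm1 * s^(i+2) / (Nat.factorial (i+2)) := by
    intro i
    induction i with
    | zero =>
      intro _ s hs
      have := Psi_base hm hderiv hlip hmem s hs
      simpa [Nat.factorial] using this
    | succ i ih =>
      intro hi s hs
      have hk : m - 1 - (i+1) + 1 = m - 1 - i := by omega
      have hd : ∀ u ∈ Icc (0:ℝ) t, HasDerivAt (Psif m c fd (m-1-(i+1)))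
          (Psif m c fd (m-1-i) u) u := by
        intro u hu
        have := Psi_deriv hderiv (k := m-1-(i+1)) (by omega) (hmem u hu)
        rwa [hk] at this
      have := step_bound (i+2) hd (Psi_zero (by omega)) (fun u hu => ih (by omega) u hu) s hs
      exact this
  -- D bounds by downward induction
  have hDb : ∀ k, k ≤ m → ∀ s ∈ Icc (0:ℝ) t,
      |Dfun m c fd (m - k) s| ≤ Fm1 * s^(k+1) / (Nat.factorial (k+1)) := by
    intro k
    induction k with
    | zero =>
      intro _ s hs
      have h2 : m + 1 - m = 1 := by omega
      have hDm : Dfun m c fd m s = fd m (c+s) - fd m c := by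
        simp [Dfun, h2, Finset.sum_range_one]
      have h := hlip (c+s) (hmem s hs) c hc
      have he : c + s - c = s := by ring
      rw [he, abs_of_nonneg hs.1] at h
      rw [Nat.sub_zero, hDm]
      simpa [Nat.factorial] using h
    | succ k ih =>
      intro hk s hs
      have hkk : m - (k+1) + 1 = m - k := by omega
      have hd : ∀ u ∈ Icc (0:ℝ) t, HasDerivAt (Dfun m c fd (m-(k+1)))
          (Dfun m c fd (m-k) u) u := by
        intro u hu
        have := D_deriv hderiv (k := m - (k+1)) (by omega) (hmem u hu)
        rwa [hkk] at this
      exact step_bound (k+1) hd (D_zero (by omega)) (fun u hu => ih (by omega) u hu) s hs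
  have htIcc : t ∈ Icc (0:ℝ) t := right_mem_Icc.2 (le_of_lt ht0)
  have hD0t : |Dfun m c fd 0 t| ≤ Fm1 * t^(m+1) / (Nat.factorial (m+1)) := by
    have := hDb m le_rfl t htIcc
    rwa [Nat.sub_self] at this
  have hψ0t : |Psif m c fd 0 t| ≤ Fm1 * t^(m+1) / (Nat.factorial (m+1)) := by
    have := hind (m-1) le_rfl t htIcc
    rw [Nat.sub_self] at this
    have he : m - 1 + 2 = m + 1 := by omega
    rwa [he] at this
  -- Fm1 nonneg
  have hF : 0 ≤ Fm1 := by
    have h := hDb 0 (by omega) t htIcc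
    have h2 : (0:ℝ) ≤ Fm1 * t^(0+1)/(Nat.factorial (0+1)) := le_trans (abs_nonneg _) h
    norm_num at h2
    nlinarith [h2, ht0]
  -- φ agrees with (s^m)⁻¹ * D 0 s near t
  have heq : φ =ᶠ[nhds t] fun s => (s^m)⁻¹ * Dfun m c fd 0 s := by
    filter_upwards [Ioi_mem_nhds ht0] with s hs
    rw [hφ s, if_neg (ne_of_gt hs)]
    simp only [Dfun, Nat.sub_zero, zero_add]
  have htm : t^m ≠ 0 := pow_ne_zero _ (ne_of_gt ht0)
  have hder0 : HasDerivAt (fun s => (s^m)⁻¹ * Dfun m c fd 0 s)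
      (-((m:ℝ) * t^(m-1)) / (t^m)^2 * Dfun m c fd 0 t + (t^m)⁻¹ * Dfun m c fd 1 t) t :=
    ((hasDerivAt_pow m t).inv htm).mul (D_deriv hderiv (by omega) (hmem t htIcc))
  have hval : -((m:ℝ) * t^(m-1)) / (t^m)^2 * Dfun m c fd 0 t + (t^m)⁻¹ * Dfun m c fd 1 t
      = (t^(m+1))⁻¹ * Psif m c fd 0 t := by
    have e1 : (t^m)^2 = t^(m-1) * t^(m+1) := by
      rw [← pow_mul, ← pow_add]
      congr 1
      omega
    have e2 : t^(m+1) = t^m * t := by rw [pow_succ]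
    have htm1 : t^(m-1) ≠ 0 := pow_ne_zero _ (ne_of_gt ht0)
    have htm2 : t^(m+1) ≠ 0 := pow_ne_zero _ (ne_of_gt ht0)
    have e2' := e2
    rw [e1]
    simp only [Psif, Nat.cast_zero, sub_zero]
    field_simp
    ring_nf
  have hder : HasDerivAt φ ((t^(m+1))⁻¹ * Psif m c fd 0 t) t :=
    (hval ▸ hder0).congr_of_eventuallyEq heq
  have hdval : deriv φ t = (t^(m+1))⁻¹ * Psif m c fd 0 t := hder.deriv
  have hfac : (0:ℝ) < Nat.factorial m := by positivity
  have hfac1 : (Nat.factorial m : ℝ) ≤ (Nat.factorial (m+1) : ℝ) := by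
    exact_mod_cast Nat.factorial_le (Nat.le_succ m)
  have htp : (0:ℝ) < t^(m+1) := pow_pos ht0 _
  refine ⟨?_, hder.differentiableAt, ?_⟩
  · -- |φ t| ≤ Fm1/m! * t
    have hφt : φ t = (t^m)⁻¹ * Dfun m c fd 0 t := by
      rw [hφ t, if_neg (ne_of_gt ht0)]
      simp only [Dfun, Nat.sub_zero, zero_add]
    rw [hφt, abs_mul, abs_inv, abs_pow, abs_of_pos ht0]
    have h1 : (t^m)⁻¹ * |Dfun m c fd 0 t| ≤ (t^m)⁻¹ * (Fm1 * t^(m+1) / (Nat.factorial (m+1))) := by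
      apply mul_le_mul_of_nonneg_left hD0t (by positivity)
    refine h1.trans ?_
    have htmp : (0:ℝ) < t^m := pow_pos ht0 _
    have key1 : (t^m)⁻¹ * (Fm1 * t^(m+1) / (Nat.factorial (m+1)))
        = Fm1 * t / (Nat.factorial (m+1)) := by
      rw [pow_succ]
      field_simp
    rw [key1]
    have hnum : 0 ≤ Fm1 * t := mul_nonneg hF ht0.le
    calc Fm1 * t / (Nat.factorial (m+1)) ≤ Fm1 * t / (Nat.factorial m) := by
          gcongr
      _ = Fm1 / (Nat.factorial m) * t := by ring
  · rw [hdval, abs_mul, abs_inv, abs_pow, abs_of_pos ht0]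
    have h1 : (t^(m+1))⁻¹ * |Psif m c fd 0 t| ≤ (t^(m+1))⁻¹ * (Fm1 * t^(m+1) / (Nat.factorial (m+1))) :=
      mul_le_mul_of_nonneg_left hψ0t (by positivity)
    refine h1.trans ?_
    have key2 : (t^(m+1))⁻¹ * (Fm1 * t^(m+1) / (Nat.factorial (m+1)))
        = Fm1 / (Nat.factorial (m+1)) := by
      field_simp
    rw [key2]
    gcongr

/-- m ≥ 2 case: the derivative of the normalized m-th order Taylor remainder φ
satisfies |φ'(t)| ≤ F_{m+1}/m! for t ≠ 0, hence φ is Lipschitz with constant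
F_{m+1}/m!. -/
theorem remainder_deriv_bound (m : ℕ) (hm : 2 ≤ m) (a b c : ℝ) (hc : c ∈ Ioo a b)
    (fd : ℕ → ℝ → ℝ) (Fm1 : ℝ)
    (hderiv : ∀ k < m, ∀ t ∈ Ioo a b, HasDerivAt (fd k) (fd (k + 1) t) t)
    (hlip : ∀ t ∈ Ioo a b, ∀ t' ∈ Ioo a b, |fd m t - fd m t'| ≤ Fm1 * |t - t'|)
    (φ : ℝ → ℝ)
    (hφ : ∀ t, φ t = if t = 0 then 0
      else (t ^ m)⁻¹ * (fd 0 (c + t) - ∑ k ∈ Finset.range (m + 1),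
        fd k c * t ^ k / (Nat.factorial k))) :
    (∀ t ∈ Ioo (a - c) (b - c), t ≠ 0 → |deriv φ t| ≤ Fm1 / (Nat.factorial m)) ∧
    (∀ t ∈ Ioo (a - c) (b - c), ∀ t' ∈ Ioo (a - c) (b - c),
      |φ t - φ t'| ≤ (Fm1 / (Nat.factorial m)) * |t - t'|) := by
  have hsq : ((-1:ℝ)^m) * ((-1:ℝ)^m) = 1 := by
    rw [← mul_pow]; norm_num
  have hpos := remainder_pos_case m hm a b c hc fd Fm1 hderiv hlip φ hφ
  -- reflected data
  set fd2 : ℕ → ℝ → ℝ := fun k x => (-1:ℝ)^k * fd k (2*c - x) with hfd2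
  set φ2 : ℝ → ℝ := fun t => (-1:ℝ)^m * φ (-t) with hφ2def
  have hc2 : c ∈ Ioo (2*c - b) (2*c - a) := ⟨by linarith [hc.2], by linarith [hc.1]⟩
  have hderiv2 : ∀ k < m, ∀ x ∈ Ioo (2*c - b) (2*c - a), HasDerivAt (fd2 k) (fd2 (k+1) x) x := by
    intro k hk x hx
    have hmem : 2*c - x ∈ Ioo a b := ⟨by linarith [hx.2], by linarith [hx.1]⟩
    have hneg : HasDerivAt (fun y : ℝ => 2*c - y) (-1) x := by
      simpa using ((hasDerivAt_id x).const_sub (2*c))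
    have h1 : HasDerivAt (fun y => fd k (2*c - y)) (fd (k+1) (2*c - x) * -1) x :=
      (hderiv k hk _ hmem).comp x hneg
    have h2 := h1.const_mul ((-1:ℝ)^k)
    refine h2.congr_deriv ?_
    show ((-1:ℝ)^k) * (fd (k+1) (2*c-x) * -1) = (-1:ℝ)^(k+1) * fd (k+1) (2*c - x)
    ring
  have hlip2 : ∀ x ∈ Ioo (2*c - b) (2*c - a), ∀ y ∈ Ioo (2*c - b) (2*c - a),
      |fd2 m x - fd2 m y| ≤ Fm1 * |x - y| := by
    intro x hx y hy
    have hmx : 2*c - x ∈ Ioo a b := ⟨by linarith [hx.2], by linarith [hx.1]⟩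
    have hmy : 2*c - y ∈ Ioo a b := ⟨by linarith [hy.2], by linarith [hy.1]⟩
    have h := hlip (2*c - x) hmx (2*c - y) hmy
    have e : 2*c - x - (2*c - y) = -(x - y) := by ring
    rw [e, abs_neg] at h
    calc |fd2 m x - fd2 m y| = |(-1:ℝ)^m * (fd m (2*c - x) - fd m (2*c - y))| := by
          rw [hfd2]; ring_nf
      _ = |fd m (2*c - x) - fd m (2*c - y)| := by
          rw [abs_mul, abs_pow, abs_neg, abs_one, one_pow, one_mul]
      _ ≤ Fm1 * |x - y| := h
  have hφ0 : φ 0 = 0 := by rw [hφ 0]; simp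
  have hφ2 : ∀ t, φ2 t = if t = 0 then 0
      else (t ^ m)⁻¹ * (fd2 0 (c + t) - ∑ k ∈ Finset.range (m + 1),
        fd2 k c * t ^ k / (Nat.factorial k)) := by
    intro t
    by_cases h : t = 0
    · subst h
      simp [hφ2def, hφ0]
    · rw [if_neg h, hφ2def]
      simp only
      rw [hφ (-t), if_neg (neg_ne_zero.2 h)]
      have e1 : c + -t = 2*c - (c + t) := by ring
      have e2 : (2:ℝ)*c - c = c := by ring
      have hsum : (∑ k ∈ Finset.range (m+1), fd k c * (-t)^k / (Nat.factorial k))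
          = ∑ k ∈ Finset.range (m+1), fd2 k c * t^k / (Nat.factorial k) := by
        apply Finset.sum_congr rfl
        intro k _
        rw [hfd2]
        simp only [e2]
        rw [neg_pow]
        ring
      rw [e1, hsum]
      have hfd20 : fd2 0 (c + t) = fd 0 (2*c - (c+t)) := by rw [hfd2]; simp
      rw [← hfd20, show ((-t:ℝ))^m = (-1:ℝ)^m * t^m from neg_pow t m]
      have hne : ((-1:ℝ)^m) ≠ 0 := pow_ne_zero _ (by norm_num)
      calc (-1:ℝ)^m * (((-1:ℝ)^m * t^m)⁻¹ *
            (fd2 0 (c+t) - ∑ k ∈ Finset.range (m+1), fd2 k c * t^k / (Nat.factorial k)))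
          = ((-1:ℝ)^m * ((-1:ℝ)^m)⁻¹) * ((t^m)⁻¹ *
            (fd2 0 (c+t) - ∑ k ∈ Finset.range (m+1), fd2 k c * t^k / (Nat.factorial k))) := by
            rw [mul_inv]; ring
        _ = (t^m)⁻¹ * (fd2 0 (c+t) - ∑ k ∈ Finset.range (m+1),
            fd2 k c * t^k / (Nat.factorial k)) := by
            rw [mul_inv_cancel₀ hne, one_mul]
  have hpos2 := remainder_pos_case m hm (2*c - b) (2*c - a) c hc2 fd2 Fm1 hderiv2 hlip2 φ2 hφ2
  have hφeq : φ = fun x => (-1:ℝ)^m * φ2 (-x) := by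
    funext x
    rw [hφ2def]
    simp only [neg_neg]
    rw [← mul_assoc, hsq, one_mul]
  -- value bound
  have hval : ∀ s ∈ Ioo (a - c) (b - c), |φ s| ≤ Fm1 / (Nat.factorial m) * |s| := by
    intro s hs
    rcases lt_trichotomy s 0 with h1 | h1 | h1
    · have hu : -s ∈ Ioo (0:ℝ) (2*c - a - c) := ⟨by linarith, by linarith [hs.1]⟩
      have h2 := (hpos2 (-s) hu).1
      have : |φ2 (-s)| = |φ s| := by
        rw [hφ2def]
        simp only [neg_neg]
        rw [abs_mul, abs_pow, abs_neg, abs_one, one_pow, one_mul]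
      rw [this] at h2
      rwa [abs_of_neg h1]
    · subst h1; simp [hφ0]
    · have h2 := (hpos s ⟨h1, hs.2⟩).1
      rwa [abs_of_pos h1]
  -- derivative facts for nonzero points
  have hdiff : ∀ s ∈ Ioo (a - c) (b - c), s ≠ 0 →
      DifferentiableAt ℝ φ s ∧ |deriv φ s| ≤ Fm1 / (Nat.factorial m) := by
    intro s hs hne
    rcases lt_or_gt_of_ne hne with h1 | h1
    · have hu : -s ∈ Ioo (0:ℝ) (2*c - a - c) := ⟨by linarith, by linarith [hs.1]⟩
      obtain ⟨-, hd2, hb2⟩ := hpos2 (-s) hu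
      constructor
      · rw [hφeq]
        exact ((hd2.comp s (differentiable_neg s)).const_mul _)
      · rw [hφeq]
        rw [deriv_const_mul_field, deriv_comp_neg]
        rw [abs_mul, abs_pow, abs_neg, abs_one, one_pow, one_mul, abs_neg]
        exact hb2
    · obtain ⟨-, hd2, hb2⟩ := hpos s ⟨h1, hs.2⟩
      exact ⟨hd2, hb2⟩
  refine ⟨fun t ht hne => (hdiff t ht hne).2, ?_⟩
  -- Lipschitz
  have key : ∀ t ∈ Ioo (a - c) (b - c), ∀ t' ∈ Ioo (a - c) (b - c), t' ≤ t →
      |φ t - φ t'| ≤ Fm1 / (Nat.factorial m) * (t - t') := by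
    intro t ht t' ht' hle
    rcases lt_or_ge 0 t' with h1 | h1
    · have hmvt := norm_image_sub_le_of_norm_deriv_le_segment'
        (f := φ) (f' := fun x => deriv φ x) (a := t') (b := t)
        (C := Fm1 / (Nat.factorial m))
        (fun x hx => ((hdiff x ⟨lt_of_lt_of_le ht'.1 hx.1, lt_of_le_of_lt hx.2 ht.2⟩
          (ne_of_gt (lt_of_lt_of_le h1 hx.1))).1.hasDerivAt).hasDerivWithinAt)
        (fun x hx => by
          have hxm : x ∈ Ioo (a-c) (b-c) := ⟨lt_of_lt_of_le ht'.1 hx.1, lt_trans hx.2 ht.2⟩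
          have hxne : x ≠ 0 := ne_of_gt (lt_of_lt_of_le h1 hx.1)
          simpa [Real.norm_eq_abs] using (hdiff x hxm hxne).2)
        t (right_mem_Icc.2 hle)
      simpa [Real.norm_eq_abs] using hmvt
    · rcases lt_or_ge t 0 with h2 | h2
      · have hmvt := norm_image_sub_le_of_norm_deriv_le_segment'
          (f := φ) (f' := fun x => deriv φ x) (a := t') (b := t)
          (C := Fm1 / (Nat.factorial m))
          (fun x hx => ((hdiff x ⟨lt_of_lt_of_le ht'.1 hx.1, lt_of_le_of_lt hx.2 ht.2⟩
            (ne_of_lt (lt_of_le_of_lt hx.2 h2))).1.hasDerivAt).hasDerivWithinAt)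
          (fun x hx => by
            have hxm : x ∈ Ioo (a-c) (b-c) := ⟨lt_of_lt_of_le ht'.1 hx.1, lt_trans hx.2 ht.2⟩
            have hxne : x ≠ 0 := ne_of_lt (lt_trans hx.2 h2)
            simpa [Real.norm_eq_abs] using (hdiff x hxm hxne).2)
          t (right_mem_Icc.2 hle)
        simpa [Real.norm_eq_abs] using hmvt
      · have v1 := hval t ht
        have v2 := hval t' ht'
        rw [abs_of_nonneg h2] at v1
        rw [abs_of_nonpos h1] at v2
        have htri : |φ t - φ t'| ≤ |φ t| + |φ t'| := by
          rw [sub_eq_add_neg]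
          exact (abs_add_le _ _).trans (by rw [abs_neg])
        linarith
  intro t ht t' ht'
  rcases le_total t' t with hle | hle
  · rw [abs_of_nonneg (sub_nonneg.2 hle)]
    exact key t ht t' ht' hle
  · rw [abs_sub_comm (φ t) (φ t'), abs_sub_comm t t', abs_of_nonneg (sub_nonneg.2 hle)]
    exact key t' ht' t ht hle
end
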